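/- Let K be a proper, relatively closed, nonempty subset of the open unit disc Δ ⊂ ℂ such that K is compact as a subset of ℂ. Then there exist a point z₀ ∈ K and a polynomial f ∈ ℂ[z] such that f(z₀) = 1 and |f(z)| < 1 for all z ∈ K with z ≠ z₀. -/

import Mathlib

/-!
A point `z₀` of `K` farthest from some point `c ∉ K` is a peak point of the affine polynomial
`z ↦ ((z - c) + (z₀ - c)) / (2 (z₀ - c))`: on `K` the vector `z - c` is no longer than
`z₀ - c`, and by strict convexity of the norm the sum of two such vectors has norm
`2 ‖z₀ - c‖` only when they coincide.
-/

open Set Metric Polynomial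

theorem norm_add_lt_two_mul_of_norm_le_of_ne {E : Type*} [NormedAddCommGroup E]
    [NormedSpace ℝ E] [StrictConvexSpace ℝ E] {x y : E} (hle : ‖y‖ ≤ ‖x‖) (hne : y ≠ x) :
    ‖x + y‖ < 2 * ‖x‖ := by
  rcases hle.lt_or_eq with hlt | heq
  · linarith [norm_add_le x y]
  · have hray : ¬SameRay ℝ x y := fun h => hne (h.eq_of_norm_eq heq.symm).symm
    linarith [norm_add_lt_of_not_sameRay hray]

theorem exists_polynomial_peak_of_farthest {K : Set ℂ} {c z₀ : ℂ} (hz₀ : z₀ ≠ c)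
    (hfar : ∀ z ∈ K, ‖z - c‖ ≤ ‖z₀ - c‖) :
    ∃ f : ℂ[X], f.eval z₀ = 1 ∧ ∀ z ∈ K, z ≠ z₀ → ‖f.eval z‖ < 1 := by
  have hd : z₀ - c ≠ 0 := sub_ne_zero.mpr hz₀
  have heval : ∀ z, (C (2 * (z₀ - c))⁻¹ * (X + C (z₀ - 2 * c))).eval z
      = ((z₀ - c) + (z - c)) / (2 * (z₀ - c)) := by
    intro z
    simp only [eval_mul, eval_add, eval_C, eval_X]
    ring
  refine ⟨C (2 * (z₀ - c))⁻¹ * (X + C (z₀ - 2 * c)), ?_, fun z hz hne => ?_⟩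
  · rw [heval]
    field_simp
    ring
  · have hlt : ‖(z₀ - c) + (z - c)‖ < 2 * ‖z₀ - c‖ :=
      norm_add_lt_two_mul_of_norm_le_of_ne (hfar z hz) (fun h => hne (sub_left_injective h))
    rw [heval, norm_div, norm_mul, Complex.norm_two, div_lt_one (by positivity)]
    exact hlt

theorem IsCompact.exists_polynomial_peak_point {K : Set ℂ} (hK : IsCompact K)
    (hne : K.Nonempty) :
    ∃ z₀ ∈ K, ∃ f : ℂ[X], f.eval z₀ = 1 ∧ ∀ z ∈ K, z ≠ z₀ → ‖f.eval z‖ < 1 := by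
  obtain ⟨c, hc⟩ : ∃ c, c ∉ K := (ne_univ_iff_exists_notMem K).mp hK.ne_univ
  obtain ⟨z₀, hz₀, hmax⟩ := hK.exists_isMaxOn hne (f := fun z => ‖z - c‖) (by fun_prop)
  have hz₀c : z₀ ≠ c := fun h => hc (h ▸ hz₀)
  exact ⟨z₀, hz₀, exists_polynomial_peak_of_farthest hz₀c hmax⟩

/-- A nonempty compact proper relatively closed subset `K` of the open unit disc admits a
polynomial peak point: a point `z₀ ∈ K` and a polynomial `f` with `f z₀ = 1` and `|f| < 1`
on `K \ {z₀}`. -/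
theorem exists_polynomial_peak_point
    (K : Set ℂ) (hKne : K.Nonempty)
    (hKcpt : IsCompact K) :
    ∃ z₀ ∈ K, ∃ f : Polynomial ℂ, f.eval z₀ = 1 ∧
      ∀ z ∈ K, z ≠ z₀ → ‖f.eval z‖ < 1 :=
  hKcpt.exists_polynomial_peak_point hKne
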